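/- In a pre-Abstract Krivine Structure, for P, Q, R ∈ P_⊥(Π): if R ⊆ P ∘ Q then Q → R ⊆ (E(^⊥P))^⊥, where E = S(K(SKK)). -/

import Mathlib

def dperp {Lam Stk : Type*} (perp : Lam → Stk → Prop) (L : Set Lam) : Set Stk :=
  {π | ∀ t ∈ L, perp t π}

def uperp {Lam Stk : Type*} (perp : Lam → Stk → Prop) (P : Set Stk) : Set Lam :=
  {t | ∀ π ∈ P, perp t π}

def PperpP {Lam Stk : Type*} (perp : Lam → Stk → Prop) : Set (Set Stk) :=
  {P | dperp perp (uperp perp P) = P}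

/-- `L · R = { t·π : t ∈ L, π ∈ R }`. -/
def pushSet {Lam Stk : Type*} (push : Lam → Stk → Stk) (L : Set Lam) (R : Set Stk) :
    Set Stk := {σ | ∃ t ∈ L, ∃ π ∈ R, σ = push t π}

/-- `P ∘ Q = (^⊥{π : (^⊥Q)·π ⊆ P})^⊥`. -/
def circ {Lam Stk : Type*} (perp : Lam → Stk → Prop) (push : Lam → Stk → Stk)
    (P Q : Set Stk) : Set Stk :=
  dperp perp (uperp perp {π | ∀ t ∈ uperp perp Q, push t π ∈ P})

/-- `P → Q = (^⊥((^⊥P)·Q))^⊥`. -/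
def arrow {Lam Stk : Type*} (perp : Lam → Stk → Prop) (push : Lam → Stk → Stk)
    (P Q : Set Stk) : Set Stk :=
  dperp perp (uperp perp (pushSet push (uperp perp P) Q))

/-! `E t ⊥ s·π` reduces to `SKK ⊥ (t s)·π` and then to `t s ⊥ π`, so `E t` realizes the
application of `t`. Given `t ∈ ^⊥P`, `s ∈ ^⊥Q` and `ρ ∈ R ⊆ P ∘ Q`, the term `t s` is orthogonal
to every `π` with `(^⊥Q)·π ⊆ P`, hence to `ρ`; so `E t ⊥ s·ρ`, i.e. `E t ∈ ^⊥((^⊥Q)·R)`, which is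
orthogonal to all of `Q → R`. -/

section Krivine

variable {Lam Stk : Type*} {perp : Lam → Stk → Prop} {push : Lam → Stk → Stk}
  {app : Lam → Lam → Lam} {K S : Lam}

theorem perp_SKK_push
    (hS1 : ∀ t s π, perp t (push s π) → perp (app t s) π)
    (hS2 : ∀ t π, perp t π → ∀ s, perp K (push t (push s π)))
    (hS3 : ∀ t s u π, perp (app (app t u) (app s u)) π →
      perp S (push t (push s (push u π))))
    {t : Lam} {π : Stk} (h : perp t π) :
    perp (app (app S K) K) (push t π) :=
  hS1 _ _ _ <| hS1 _ _ _ <| hS3 _ _ _ _ <| hS1 _ _ _ <| hS1 _ _ _ <| hS2 _ _ h _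

theorem perp_E_push_of_perp_app
    (hS1 : ∀ t s π, perp t (push s π) → perp (app t s) π)
    (hS2 : ∀ t π, perp t π → ∀ s, perp K (push t (push s π)))
    (hS3 : ∀ t s u π, perp (app (app t u) (app s u)) π →
      perp S (push t (push s (push u π))))
    {t s : Lam} {π : Stk} (h : perp (app t s) π) :
    perp (app (app S (app K (app (app S K) K))) t) (push s π) :=
  hS1 _ _ _ <| hS1 _ _ _ <| hS3 _ _ _ _ <| hS1 _ _ _ <| hS1 _ _ _ <| hS1 _ _ _ <|
    hS2 _ _ (perp_SKK_push hS1 hS2 hS3 h) _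

theorem app_mem_uperp_of_mem_uperp
    (hS1 : ∀ t s π, perp t (push s π) → perp (app t s) π)
    {P Q : Set Stk} {t s : Lam} (ht : t ∈ uperp perp P) (hs : s ∈ uperp perp Q) :
    app t s ∈ uperp perp {π | ∀ u ∈ uperp perp Q, push u π ∈ P} :=
  fun _ hπ => hS1 _ _ _ (ht _ (hπ s hs))

theorem uperp_pushSet_subset_uperp_arrow (P Q : Set Stk) :
    uperp perp (pushSet push (uperp perp P) Q) ⊆ uperp perp (arrow perp push P Q) :=
  fun _ hv _ hπ => hπ _ hv

end Krivine

theorem arrow_subset_of_circ_general {Lam Stk : Type*} (perp : Lam → Stk → Prop)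
    (push : Lam → Stk → Stk) (app : Lam → Lam → Lam) (K S : Lam)
    (hS1 : ∀ t s π, perp t (push s π) → perp (app t s) π)
    (hS2 : ∀ t π, perp t π → ∀ s, perp K (push t (push s π)))
    (hS3 : ∀ t s u π, perp (app (app t u) (app s u)) π →
      perp S (push t (push s (push u π))))
    (P Q R : Set Stk)
    (h : R ⊆ circ perp push P Q) :
    arrow perp push Q R ⊆
      dperp perp {v | ∃ t ∈ uperp perp P,
        v = app (app S (app K (app (app S K) K))) t} := by
  rintro π hπ _ ⟨t, ht, rfl⟩
  refine uperp_pushSet_subset_uperp_arrow Q R ?_ π hπ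
  rintro _ ⟨s, hs, ρ, hρ, rfl⟩
  have hts : perp (app t s) ρ := h hρ _ (app_mem_uperp_of_mem_uperp hS1 ht hs)
  exact perp_E_push_of_perp_app hS1 hS2 hS3 hts

/-- If `R ⊆ P ∘ Q` then `Q → R ⊆ (E(^⊥P))^⊥`, where `E = S(K(SKK))`. -/
theorem arrow_subset_of_circ {Lam Stk : Type*} (perp : Lam → Stk → Prop)
    (push : Lam → Stk → Stk) (app : Lam → Lam → Lam) (K S : Lam)
    (hS1 : ∀ t s π, perp t (push s π) → perp (app t s) π)
    (hS2 : ∀ t π, perp t π → ∀ s, perp K (push t (push s π)))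
    (hS3 : ∀ t s u π, perp (app (app t u) (app s u)) π →
      perp S (push t (push s (push u π))))
    (P Q R : Set Stk)
    (hP : P ∈ PperpP perp) (hQ : Q ∈ PperpP perp) (hR : R ∈ PperpP perp)
    (h : R ⊆ circ perp push P Q) :
    arrow perp push Q R ⊆
      dperp perp {v | ∃ t ∈ uperp perp P,
        v = app (app S (app K (app (app S K) K))) t} :=
  arrow_subset_of_circ_general perp push app K S hS1 hS2 hS3 P Q R h
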